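/- Let M > 0, h ≥ 1, R > 1, and let ω ∈ C^∞(ℝ) satisfy |ω(ξ)| ≤ 1 for all ξ, ω(ξ) = 0 for |ξ| ≤ 1, and ω constant on each of the sets {ξ ≥ R} and {ξ ≤ −R}. Define λ(x,ξ) := M·ω(ξ/h)·∫₀ˣ ⟨y⟩^{-1} dy. Then for every integer α ≥ 1 there exists a constant C'_{α,R} > 0, depending on α, R and ω but not on h, M, x, ξ, such that |∂_ξ^α λ(x,ξ)| ≤ M·C'_{α,R}·⟨ξ⟩_h^{-α}·(1 + ln⟨x⟩·χ_{E_{h,R}}(ξ)) for all x, ξ ∈ ℝ, where χ_{E_{h,R}} is the characteristic function of the set E_{h,R} = {ξ ∈ ℝ : h ≤ |ξ| ≤ hR}. -/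

import Mathlib

open MeasureTheory Real

noncomputable section

/-- The Japanese bracket `⟨x⟩ = (1 + x²)^(1/2)`. -/
def jb (x : ℝ) : ℝ := Real.sqrt (1 + x ^ 2)

/-- `⟨ξ⟩ₕ = (h² + ξ²)^(1/2)`. -/
def jbh (h ξ : ℝ) : ℝ := Real.sqrt (h ^ 2 + ξ ^ 2)

/-!
Since `∫₀ˣ ⟨y⟩⁻¹ dy = arsinh x`, the chain rule gives `∂_ξ^α λ = M h^{-α} ω^{(α)}(ξ/h) arsinh x`.
For `α ≥ 1` this vanishes off `E_{h,R}`, because `ω(·/h)` is locally constant on `|ξ| < h` and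
on `|ξ| > hR`. On `E_{h,R}` one has `⟨ξ⟩_h ≤ h⟨R⟩`, so `h^{-α} ≤ ⟨R⟩^α ⟨ξ⟩_h^{-α}`; moreover
`ω^{(α)}` is continuous with compact support, hence bounded, and
`|arsinh x| ≤ log 2 + log⟨x⟩ ≤ 1 + log⟨x⟩`.
-/

lemma one_le_jb (x : ℝ) : 1 ≤ jb x :=
  Real.one_le_sqrt.2 (by nlinarith [sq_nonneg x])

lemma jb_pos (x : ℝ) : 0 < jb x :=
  one_pos.trans_le (one_le_jb x)

lemma integral_inv_jb (x : ℝ) : ∫ y in (0:ℝ)..x, (jb y)⁻¹ = arsinh x := by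
  have hcont : Continuous fun y => (jb y)⁻¹ :=
    (continuous_const.add (continuous_pow 2)).sqrt.inv₀ fun y => (jb_pos y).ne'
  rw [intervalIntegral.integral_eq_sub_of_hasDerivAt
    (fun y _ => by simpa only [jb] using hasDerivAt_arsinh y) (hcont.intervalIntegrable 0 x),
    arsinh_zero, sub_zero]

lemma abs_arsinh_le (x : ℝ) : |arsinh x| ≤ 1 + log (jb x) := by
  have hlog2 : log 2 ≤ 1 := by linarith [log_two_lt_d9]
  have habs : |arsinh x| = arsinh |x| := by
    rcases le_or_gt 0 x with hx | hx
    · rw [abs_of_nonneg hx, abs_of_nonneg (arsinh_nonneg_iff.2 hx)]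
    · rw [abs_of_neg hx, abs_of_neg (arsinh_neg_iff.2 hx), arsinh_neg]
  have hx : |x| ≤ jb x := by
    rw [← sqrt_sq_eq_abs]
    exact Real.sqrt_le_sqrt (by linarith)
  calc |arsinh x| = log (|x| + jb x) := by rw [habs, arsinh, sq_abs, jb]
    _ ≤ log (2 * jb x) := log_le_log (by linarith [abs_nonneg x, jb_pos x]) (by linarith)
    _ = log 2 + log (jb x) := log_mul two_ne_zero (jb_pos x).ne'
    _ ≤ 1 + log (jb x) := by linarith

lemma jbh_pos {h : ℝ} (hh : 0 < h) (ξ : ℝ) : 0 < jbh h ξ :=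
  Real.sqrt_pos.2 (by positivity)

lemma jbh_le_mul_jb {h R ξ : ℝ} (hh : 0 ≤ h) (hξ : |ξ| ≤ h * R) : jbh h ξ ≤ h * jb R := by
  have hξ2 : ξ ^ 2 ≤ h ^ 2 * R ^ 2 := by
    simpa only [sq_abs, mul_pow] using pow_le_pow_left₀ (abs_nonneg ξ) hξ 2
  calc jbh h ξ ≤ Real.sqrt (h ^ 2 * (1 + R ^ 2)) := Real.sqrt_le_sqrt (by linarith)
    _ = h * jb R := by rw [Real.sqrt_mul (by positivity), Real.sqrt_sq hh, jb]

lemma inv_pow_le_jb_pow_mul_jbh_rpow {h R ξ : ℝ} (hh : 0 < h) (hξ : |ξ| ≤ h * R) (k : ℕ) :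
    h⁻¹ ^ k ≤ jb R ^ k * jbh h ξ ^ (-(k : ℝ)) := by
  rw [rpow_neg (jbh_pos hh ξ).le, rpow_natCast, ← div_eq_mul_inv, ← div_pow]
  gcongr
  rw [le_div_iff₀ (jbh_pos hh ξ), inv_mul_le_iff₀ hh]
  exact jbh_le_mul_jb hh.le hξ

lemma iteratedDeriv_comp_div_const {𝕜 : Type*} [NontriviallyNormedField 𝕜] {f : 𝕜 → 𝕜}
    {n : ℕ} (hf : ContDiff 𝕜 n f) (c x : 𝕜) :
    iteratedDeriv n (fun y => f (y / c)) x = c⁻¹ ^ n * iteratedDeriv n f (x / c) := by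
  simp only [div_eq_inv_mul]
  exact congrFun (iteratedDeriv_comp_const_mul hf c⁻¹) x

lemma iteratedDeriv_succ_eq_zero_of_eqOn_const {𝕜 F : Type*} [NontriviallyNormedField 𝕜]
    [NormedAddCommGroup F] [NormedSpace 𝕜 F] {f : 𝕜 → F} {s : Set 𝕜} {c : F} {u : 𝕜}
    (hs : IsOpen s) (hf : Set.EqOn f (fun _ => c) s) (hu : u ∈ s) (n : ℕ) :
    iteratedDeriv (n + 1) f u = 0 := by
  rw [(hf.eventuallyEq_of_mem (hs.mem_nhds hu)).iteratedDeriv_eq, iteratedDeriv_const]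
  simp

lemma iteratedDeriv_succ_eq_zero_of_abs_lt_one {ω : ℝ → ℝ} (hω0 : ∀ ξ : ℝ, |ξ| ≤ 1 → ω ξ = 0)
    (n : ℕ) {u : ℝ} (hu : |u| < 1) : iteratedDeriv (n + 1) ω u = 0 :=
  iteratedDeriv_succ_eq_zero_of_eqOn_const (isOpen_lt continuous_abs continuous_const)
    (fun v hv => hω0 v (le_of_lt hv)) hu n

def symbolLambda (M h : ℝ) (ω : ℝ → ℝ) (x ξ : ℝ) : ℝ :=
  M * ω (ξ / h) * ∫ y in (0:ℝ)..x, (jb y)⁻¹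

lemma iteratedDeriv_symbolLambda {ω : ℝ → ℝ} {n : ℕ} (hω : ContDiff ℝ n ω) (M h x ξ : ℝ) :
    iteratedDeriv n (symbolLambda M h ω x) ξ
      = M * arsinh x * (h⁻¹ ^ n * iteratedDeriv n ω (ξ / h)) := by
  have hsymbol : symbolLambda M h ω x = fun ξ' => (M * arsinh x) * ω (ξ' / h) := by
    funext ξ'; rw [symbolLambda, integral_inv_jb]; ring
  rw [hsymbol, iteratedDeriv_const_mul_field, iteratedDeriv_comp_div_const hω]

lemma abs_iteratedDeriv_symbolLambda_le {ω : ℝ → ℝ} {n : ℕ} (hω : ContDiff ℝ n ω)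
    {K R M h x ξ : ℝ} (hK : ∀ u, |iteratedDeriv n ω u| ≤ K) (hM : 0 ≤ M) (hh : 0 < h)
    (hξ : |ξ| ≤ h * R) :
    |iteratedDeriv n (symbolLambda M h ω x) ξ|
      ≤ M * (K * jb R ^ n) * jbh h ξ ^ (-(n : ℝ)) * (1 + log (jb x)) := by
  have := log_nonneg (one_le_jb x)
  have := jb_pos R
  have := jbh_pos hh ξ
  calc |iteratedDeriv n (symbolLambda M h ω x) ξ|
      = M * |arsinh x| * h⁻¹ ^ n * |iteratedDeriv n ω (ξ / h)| := by
        rw [iteratedDeriv_symbolLambda hω, abs_mul, abs_mul, abs_mul, abs_of_nonneg hM,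
          abs_of_pos (pow_pos (inv_pos.2 hh) _)]
        ring
    _ ≤ M * (1 + log (jb x)) * (jb R ^ n * jbh h ξ ^ (-(n : ℝ))) * K := by
        gcongr
        exacts [abs_arsinh_le x, inv_pow_le_jb_pow_mul_jbh_rpow hh hξ _, hK _]
    _ = M * (K * jb R ^ n) * jbh h ξ ^ (-(n : ℝ)) * (1 + log (jb x)) := by ring

section Cutoff

variable {R : ℝ} {ω : ℝ → ℝ}
  (hωcp : ∀ ξ₁ ξ₂ : ℝ, R ≤ ξ₁ → R ≤ ξ₂ → ω ξ₁ = ω ξ₂)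
  (hωcm : ∀ ξ₁ ξ₂ : ℝ, ξ₁ ≤ -R → ξ₂ ≤ -R → ω ξ₁ = ω ξ₂)
include hωcp hωcm

lemma iteratedDeriv_succ_eq_zero_of_lt_abs (n : ℕ) {u : ℝ} (hu : R < |u|) :
    iteratedDeriv (n + 1) ω u = 0 := by
  rcases lt_abs.1 hu with hu | hu
  · exact iteratedDeriv_succ_eq_zero_of_eqOn_const isOpen_Ioi
      (fun v hv => hωcp v (R + 1) (le_of_lt hv) (by linarith)) hu n
  · exact iteratedDeriv_succ_eq_zero_of_eqOn_const isOpen_Iio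
      (fun v hv => hωcm v (-(R + 1)) (le_of_lt hv) (by linarith))
      (Set.mem_Iio.2 (by linarith)) n

lemma exists_bound_iteratedDeriv_succ (hω : ContDiff ℝ (⊤ : ℕ∞) ω) (n : ℕ) :
    ∃ K > 0, ∀ u, |iteratedDeriv (n + 1) ω u| ≤ K := by
  have hsupp : HasCompactSupport (iteratedDeriv (n + 1) ω) :=
    HasCompactSupport.intro (isCompact_Icc (a := -R) (b := R)) fun u hu =>
      iteratedDeriv_succ_eq_zero_of_lt_abs hωcp hωcm n
        (not_le.1 fun hle => hu (Set.mem_Icc.2 (abs_le.1 hle)))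
  obtain ⟨K, hK⟩ := hsupp.exists_bound_of_continuous
    (hω.continuous_iteratedDeriv (n + 1) (by exact_mod_cast le_top))
  exact ⟨max K 1, by positivity, fun u => (hK u).trans (le_max_left K 1)⟩

lemma iteratedDeriv_succ_symbolLambda_eq_zero_of_notMem (hω0 : ∀ ξ : ℝ, |ξ| ≤ 1 → ω ξ = 0)
    {n : ℕ} (hω : ContDiff ℝ (n + 1 : ℕ) ω) {M h : ℝ} (hh : 0 < h) (x : ℝ) {ξ : ℝ}
    (hξ : ξ ∉ {ζ : ℝ | h ≤ |ζ| ∧ |ζ| ≤ h * R}) :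
    iteratedDeriv (n + 1) (symbolLambda M h ω x) ξ = 0 := by
  have hscaled : |ξ / h| < 1 ∨ R < |ξ / h| := by
    rw [abs_div, abs_of_pos hh, div_lt_one hh, lt_div_iff₀ hh, mul_comm R]
    simpa only [Set.mem_ofPred_eq, not_and_or, not_le] using hξ
  have hvanish : iteratedDeriv (n + 1) ω (ξ / h) = 0 := by
    rcases hscaled with hlt | hlt
    exacts [iteratedDeriv_succ_eq_zero_of_abs_lt_one hω0 n hlt,
      iteratedDeriv_succ_eq_zero_of_lt_abs hωcp hωcm n hlt]
  rw [iteratedDeriv_symbolLambda hω, hvanish, mul_zero, mul_zero]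

end Cutoff

theorem stmt2_general (R : ℝ)
    (ω : ℝ → ℝ) (hω : ContDiff ℝ (⊤ : ℕ∞) ω)
    (hω0 : ∀ ξ : ℝ, |ξ| ≤ 1 → ω ξ = 0)
    (hωcp : ∀ ξ₁ ξ₂ : ℝ, R ≤ ξ₁ → R ≤ ξ₂ → ω ξ₁ = ω ξ₂)
    (hωcm : ∀ ξ₁ ξ₂ : ℝ, ξ₁ ≤ -R → ξ₂ ≤ -R → ω ξ₁ = ω ξ₂) :
    ∀ α : ℕ, 1 ≤ α → ∃ C > 0, ∀ M h : ℝ, 0 < M → 1 ≤ h → ∀ x ξ : ℝ,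
      |iteratedDeriv α
          (fun ξ' => M * ω (ξ' / h) * ∫ y in (0:ℝ)..x, (jb y)⁻¹) ξ| ≤
        M * C * jbh h ξ ^ (-(α : ℝ)) *
          (1 + Real.log (jb x) *
            Set.indicator {ζ : ℝ | h ≤ |ζ| ∧ |ζ| ≤ h * R} (fun _ => (1:ℝ)) ξ) := by
  intro α hα
  obtain ⟨n, rfl⟩ : ∃ n, α = n + 1 := ⟨α - 1, by omega⟩
  have hωn : ContDiff ℝ (n + 1 : ℕ) ω := hω.of_le (by exact_mod_cast le_top)
  obtain ⟨K, hK0, hK⟩ := exists_bound_iteratedDeriv_succ hωcp hωcm hω n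
  refine ⟨K * jb R ^ (n + 1), mul_pos hK0 (pow_pos (jb_pos R) _), fun M h hM hh x ξ => ?_⟩
  have hh0 : 0 < h := by linarith
  change |iteratedDeriv (n + 1) (symbolLambda M h ω x) ξ| ≤ _
  by_cases hξ : ξ ∈ {ζ : ℝ | h ≤ |ζ| ∧ |ζ| ≤ h * R}
  · rw [Set.indicator_of_mem hξ, mul_one]
    exact abs_iteratedDeriv_symbolLambda_le hωn hK hM.le hh0 hξ.2
  · have := jb_pos R
    have := jbh_pos hh0 ξ
    rw [Set.indicator_of_notMem hξ, iteratedDeriv_succ_symbolLambda_eq_zero_of_notMem hωcp hωcm hω0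
      hωn hh0 x hξ, abs_zero, mul_zero, add_zero]
    positivity

/-- estimates for `∂_ξ^α λ(x,ξ)`, `α ≥ 1`, where
`λ(x,ξ) = M·ω(ξ/h)·∫₀ˣ ⟨y⟩⁻¹ dy`, with a constant independent of `h`, `M`, `x`, `ξ`,
involving the characteristic function of `E_{h,R} = {ξ : h ≤ |ξ| ≤ hR}`. -/
theorem stmt2 (R : ℝ) (hR : 1 < R)
    (ω : ℝ → ℝ) (hω : ContDiff ℝ (⊤ : ℕ∞) ω) (hωb : ∀ ξ : ℝ, |ω ξ| ≤ 1)
    (hω0 : ∀ ξ : ℝ, |ξ| ≤ 1 → ω ξ = 0)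
    (hωcp : ∀ ξ₁ ξ₂ : ℝ, R ≤ ξ₁ → R ≤ ξ₂ → ω ξ₁ = ω ξ₂)
    (hωcm : ∀ ξ₁ ξ₂ : ℝ, ξ₁ ≤ -R → ξ₂ ≤ -R → ω ξ₁ = ω ξ₂) :
    ∀ α : ℕ, 1 ≤ α → ∃ C > 0, ∀ M h : ℝ, 0 < M → 1 ≤ h → ∀ x ξ : ℝ,
      |iteratedDeriv α
          (fun ξ' => M * ω (ξ' / h) * ∫ y in (0:ℝ)..x, (jb y)⁻¹) ξ| ≤
        M * C * jbh h ξ ^ (-(α : ℝ)) *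
          (1 + Real.log (jb x) *
            Set.indicator {ζ : ℝ | h ≤ |ζ| ∧ |ζ| ≤ h * R} (fun _ => (1:ℝ)) ξ) :=
  stmt2_general R ω hω hω0 hωcp hωcm

end
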